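/- Let A be an n×n real symmetric positive definite matrix. Then for every n×n real matrix V with Tr(V) = 1, one has Tr(Vᵀ A V) ≥ 1 / Tr(A⁻¹), with equality achieved by V = A⁻¹ / Tr(A⁻¹). Consequently, the minimum of Tr(Vᵀ A V) over all matrices V with Tr(V) = 1 equals 1 / Tr(A⁻¹). -/

import Mathlib

/-!
Completing the square: for symmetric invertible `A` and `c = 1 / Tr(A⁻¹)`,
`Tr((V - c A⁻¹)ᵀ A (V - c A⁻¹)) = Tr(Vᵀ A V) - 2c Tr V + c² Tr(A⁻¹)`, which for `Tr V = 1`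
is `Tr(Vᵀ A V) - 1 / Tr(A⁻¹)`. The left side is nonnegative when `A` is positive
semidefinite and vanishes at `V = c A⁻¹`.
-/

open Matrix

theorem inv_sq_mul_self {G₀ : Type*} [GroupWithZero G₀] (a : G₀) : a⁻¹ ^ 2 * a = a⁻¹ := by
  simpa only [inv_inv, sq] using mul_self_mul_inv a⁻¹

namespace Matrix

variable {n K : Type*} [Fintype n] [DecidableEq n]

theorem trace_transpose_mul_mul_sub_smul_inv [CommRing K] {A : Matrix n n K} (hAs : A.IsSymm)
    (hA : IsUnit A.det) (V : Matrix n n K) (c : K) :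
    ((V - c • A⁻¹)ᵀ * A * (V - c • A⁻¹)).trace
      = (Vᵀ * A * V).trace - 2 * c * V.trace + c ^ 2 * (A⁻¹).trace := by
  have hinvt : (A⁻¹)ᵀ = A⁻¹ := by rw [transpose_nonsing_inv, hAs.eq]
  have hVA : (Vᵀ * A * A⁻¹).trace = V.trace := by
    rw [Matrix.mul_assoc, mul_nonsing_inv A hA, Matrix.mul_one, trace_transpose]
  simp only [transpose_sub, transpose_smul, hinvt, Matrix.sub_mul, Matrix.mul_sub,
    Matrix.smul_mul, Matrix.mul_smul, trace_sub, trace_smul, smul_eq_mul,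
    nonsing_inv_mul A hA, Matrix.one_mul, hVA]
  ring

theorem trace_transpose_mul_mul_smul_inv [CommRing K] {A : Matrix n n K} (hAs : A.IsSymm)
    (hA : IsUnit A.det) (c : K) :
    ((c • A⁻¹)ᵀ * A * (c • A⁻¹)).trace = c ^ 2 * (A⁻¹).trace := by
  simpa only [zero_sub, transpose_neg, Matrix.neg_mul, Matrix.mul_neg, neg_neg, transpose_zero,
    Matrix.zero_mul, trace_zero, mul_zero, sub_zero, zero_add] using
    trace_transpose_mul_mul_sub_smul_inv hAs hA 0 c

omit [DecidableEq n] in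
theorem trace_transpose_mul_mul_nonneg {A : Matrix n n ℝ} (hA : A.PosSemidef)
    (W : Matrix n n ℝ) : 0 ≤ (Wᵀ * A * W).trace := by
  simpa only [conjTranspose_eq_transpose_of_trivial] using
    (hA.conjTranspose_mul_mul_same W).trace_nonneg

theorem PosDef.inv_trace_le_trace_transpose_mul_mul {A : Matrix n n ℝ} (hA : A.PosDef)
    {V : Matrix n n ℝ} (hV : V.trace = 1) : 1 / (A⁻¹).trace ≤ (Vᵀ * A * V).trace := by
  have hsq := trace_transpose_mul_mul_nonneg hA.posSemidef (V - ((A⁻¹).trace)⁻¹ • A⁻¹)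
  rw [trace_transpose_mul_mul_sub_smul_inv (isHermitian_iff_isSymm.mp hA.isHermitian)
    ((isUnit_iff_isUnit_det A).mp hA.isUnit), hV, inv_sq_mul_self] at hsq
  rw [one_div]
  linarith

end Matrix

/-- Variational reformulation: for symmetric positive definite `A`,
`Tr(Vᵀ A V) ≥ 1 / Tr(A⁻¹)` whenever `Tr V = 1`, with equality at
`V = A⁻¹ / Tr(A⁻¹)`, so the minimum equals `1 / Tr(A⁻¹)`. -/
theorem stmt0 {n : ℕ} (hn : 0 < n) (A : Matrix (Fin n) (Fin n) ℝ)
    (hA : A.PosDef) :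
    (∀ V : Matrix (Fin n) (Fin n) ℝ, V.trace = 1 →
      1 / (A⁻¹).trace ≤ (Vᵀ * A * V).trace) ∧
    ((((A⁻¹).trace)⁻¹ • A⁻¹).trace = 1) ∧
    (((((A⁻¹).trace)⁻¹ • A⁻¹)ᵀ * A * (((A⁻¹).trace)⁻¹ • A⁻¹)).trace
        = 1 / (A⁻¹).trace) ∧
    IsLeast { t : ℝ | ∃ V : Matrix (Fin n) (Fin n) ℝ,
        V.trace = 1 ∧ t = (Vᵀ * A * V).trace } (1 / (A⁻¹).trace) := by
  have : Nonempty (Fin n) := ⟨⟨0, hn⟩⟩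
  have hmin_trace : (((A⁻¹).trace)⁻¹ • A⁻¹).trace = 1 := by
    rw [trace_smul, smul_eq_mul, inv_mul_cancel₀ hA.inv.trace_pos.ne']
  have hmin_value : ((((A⁻¹).trace)⁻¹ • A⁻¹)ᵀ * A * (((A⁻¹).trace)⁻¹ • A⁻¹)).trace
      = 1 / (A⁻¹).trace := by
    rw [trace_transpose_mul_mul_smul_inv (isHermitian_iff_isSymm.mp hA.isHermitian)
      ((isUnit_iff_isUnit_det A).mp hA.isUnit), inv_sq_mul_self, one_div]
  refine ⟨fun V hV => hA.inv_trace_le_trace_transpose_mul_mul hV, hmin_trace, hmin_value,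
    ⟨_, hmin_trace, hmin_value.symm⟩, ?_⟩
  rintro t ⟨V, hV, rfl⟩
  exact hA.inv_trace_le_trace_transpose_mul_mul hV
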